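/- The Koranyi inversion distorts the Cygan metric by the formula d_Cyg(ι(p), ι(q)) = d_Cyg(p,q) / (|p|₀ · |q|₀) for all p, q ∈ ℂ × ℝ ∖ {(0,0)}. -/

import Mathlib

noncomputable section

open Complex

/-- Heisenberg product on ℂ × ℝ. -/
def hMul (p q : ℂ × ℝ) : ℂ × ℝ :=
  (p.1 + q.1, p.2 + q.2 + 2 * ((starRingEnd ℂ) p.1 * q.1).im)

/-- Heisenberg inverse. -/
def hInv (p : ℂ × ℝ) : ℂ × ℝ := (-p.1, -p.2)

/-- Heisenberg (Koranyi) norm. -/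
def hNorm (p : ℂ × ℝ) : ℝ := (‖p.1‖ ^ 4 + p.2 ^ 2) ^ ((1 : ℝ)/4)

/-- Cygan metric. -/
def dCyg (p q : ℂ × ℝ) : ℝ :=
  (‖((‖p.1 - q.1‖ ^ 2 : ℝ) : ℂ)
    + Complex.I * ((-p.2 + q.2 - 2 * ((starRingEnd ℂ) q.1 * p.1).im : ℝ) : ℂ)‖) ^ ((1 : ℝ)/2)

/-- Koranyi inversion. -/
def kInv (p : ℂ × ℝ) : ℂ × ℝ :=
  (-p.1 / (((‖p.1‖ ^ 2 : ℝ) : ℂ) - Complex.I * (p.2 : ℂ)),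
   -p.2 / (‖p.1‖ ^ 4 + p.2 ^ 2))

/-!
With `A(ζ, v) = |ζ|² - i v` one has `|A(p)| = |p|₀²`, and the complex number under the Cygan norm
is `A(p) + conj A(q) - 2 conj(ζ_q) ζ_p`. The inversion sends `A` to `A⁻¹` and `ζ` to `-ζ / A`, so
that number for `ι p, ι q` is the one for `p, q` divided by `A(p) conj A(q)`; taking moduli and
square roots gives the formula.
-/

open ComplexConjugate

def cyganGauge (p : ℂ × ℝ) : ℂ := ((‖p.1‖ ^ 2 : ℝ) : ℂ) - I * (p.2 : ℂ)

def cyganForm (p q : ℂ × ℝ) : ℂ :=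
  cyganGauge p + conj (cyganGauge q) - 2 * conj q.1 * p.1

@[simp]
lemma cyganGauge_re (p : ℂ × ℝ) : (cyganGauge p).re = ‖p.1‖ ^ 2 := by
  simp [cyganGauge, -ofReal_pow]

@[simp]
lemma cyganGauge_im (p : ℂ × ℝ) : (cyganGauge p).im = -p.2 := by
  simp [cyganGauge, -ofReal_pow]

lemma cyganGauge_ne_zero {p : ℂ × ℝ} (hp : p ≠ ((0 : ℂ), (0 : ℝ))) : cyganGauge p ≠ 0 := by
  contrapose! hp
  simpa [Complex.ext_iff, Prod.ext_iff] using hp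

lemma normSq_cyganGauge (p : ℂ × ℝ) : normSq (cyganGauge p) = ‖p.1‖ ^ 4 + p.2 ^ 2 := by
  rw [normSq_apply, cyganGauge_re, cyganGauge_im]
  ring

lemma norm_cyganGauge (p : ℂ × ℝ) : ‖cyganGauge p‖ = hNorm p ^ 2 := by
  have h0 : 0 ≤ ‖p.1‖ ^ 4 + p.2 ^ 2 := by positivity
  rw [norm_def, normSq_cyganGauge, hNorm, Real.sqrt_eq_rpow, ← Real.rpow_natCast (_ ^ _) 2,
    ← Real.rpow_mul h0]
  norm_num

lemma hNorm_nonneg (p : ℂ × ℝ) : 0 ≤ hNorm p := by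
  unfold hNorm
  positivity

lemma kInv_fst (p : ℂ × ℝ) : (kInv p).1 = -p.1 / cyganGauge p := rfl

lemma kInv_snd (p : ℂ × ℝ) : (kInv p).2 = -p.2 / normSq (cyganGauge p) := by
  rw [normSq_cyganGauge]
  rfl

lemma cyganGauge_kInv (p : ℂ × ℝ) : cyganGauge (kInv p) = (cyganGauge p)⁻¹ := by
  apply ext
  · rw [cyganGauge_re, inv_re, cyganGauge_re, kInv_fst, norm_div, norm_neg, div_pow,
      ← normSq_eq_norm_sq (cyganGauge p)]
  · rw [cyganGauge_im, inv_im, cyganGauge_im, kInv_snd, neg_div, neg_neg, neg_neg]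

lemma dCyg_eq_sqrt_norm_cyganForm (p q : ℂ × ℝ) : dCyg p q = √‖cyganForm p q‖ := by
  rw [dCyg, Real.sqrt_eq_rpow]
  congr 2
  apply ext <;>
  simp only [cyganForm, cyganGauge_re, cyganGauge_im, add_re, add_im, sub_re, sub_im, mul_re,
    mul_im, ofReal_re, ofReal_im, I_re, I_im, conj_re, conj_im, re_ofNat, im_ofNat,
    Complex.sq_norm, normSq_apply] <;>
  ring

lemma cyganForm_kInv {p q : ℂ × ℝ} (hp : cyganGauge p ≠ 0) (hq : cyganGauge q ≠ 0) :
    cyganForm (kInv p) (kInv q) = cyganForm p q / (cyganGauge p * conj (cyganGauge q)) := by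
  have hq' : conj (cyganGauge q) ≠ 0 := (map_ne_zero _).mpr hq
  rw [cyganForm, cyganForm, cyganGauge_kInv, cyganGauge_kInv, kInv_fst, kInv_fst, map_inv₀,
    map_div₀, map_neg]
  field_simp
  ring

/-- Distortion of the Cygan metric by the Koranyi inversion. -/
theorem kInv_cygan_distortion (p q : ℂ × ℝ)
    (hp : p ≠ ((0 : ℂ), (0 : ℝ))) (hq : q ≠ ((0 : ℂ), (0 : ℝ))) :
    dCyg (kInv p) (kInv q) = dCyg p q / (hNorm p * hNorm q) := by
  rw [dCyg_eq_sqrt_norm_cyganForm, dCyg_eq_sqrt_norm_cyganForm,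
    cyganForm_kInv (cyganGauge_ne_zero hp) (cyganGauge_ne_zero hq), norm_div, norm_mul,
    norm_conj, norm_cyganGauge, norm_cyganGauge, ← mul_pow,
    Real.sqrt_div' _ (by positivity), Real.sqrt_sq (mul_nonneg (hNorm_nonneg p) (hNorm_nonneg q))]
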